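/- Let l be an odd prime and let b be a positive integer coprime to l. Write σ_b for the Frobenius of b in G = Gal(Q(μ_l)/Q) and ω for the Teichmüller character with b̄ = b mod l. Then (1 - b·σ_b^{-1}) generates the ideal Ann_{Z_l[G]}(μ_l) of Z_l[G] if and only if both (1) ω(b̄) is a generator of the group μ_{l-1} of (l-1)-st roots of unity in Z_l^×, and (2) b ≢ ω(b̄) mod l² (as elements of Z_l). -/

import Mathlib

/-!
Write `u = b mod l`, `e = 1 - b σ_u⁻¹` and `χ : ℤ_l[G] → ZMod l` for the action on `μ_l`, so that
`Ann(μ_l) = ker χ ∋ e`.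

If `u` generates `G`, then `σ_u⁻¹ ≡ b⁻¹` modulo `e` turns every `σ_a` into a scalar, so
`ℤ_l → ℤ_l[G]/(e)` is onto; its kernel contains `b ^ (l - 1) - 1`, which is `b - ω(u)` times a
unit. Hence `(e) = ker χ` as soon as `l ∈ (e)`, i.e. as soon as `l² ∤ b - ω(u)`.

Conversely, if `(e) = ker χ`, then the character `a ↦ a ^ (ord u + 1)` of `G`, which also kills
`e`, must be the identity, so `ord u = l - 1`; and applying the `ℤ_l`-valued character `ω` to
`e ∣ l` gives `b - ω(u) ∣ l`.
-/

open MonoidAlgebra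

theorem Ideal.eq_ker_of_algebraMap_quotient_surjective {R A S : Type*} [CommRing R] [CommRing A]
    [Algebra R A] [CommRing S] {I : Ideal A} {φ : A →+* S}
    (hsurj : Function.Surjective (algebraMap R (A ⧸ I))) (hI : I ≤ RingHom.ker φ)
    (hker : RingHom.ker (φ.comp (algebraMap R A)) ≤ RingHom.ker (algebraMap R (A ⧸ I))) :
    I = RingHom.ker φ := by
  refine le_antisymm hI fun x hx => ?_
  obtain ⟨c, hc⟩ := hsurj (Ideal.Quotient.mk I x)
  rw [← Ideal.Quotient.mk_algebraMap] at hc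
  have hφc : φ (algebraMap R A c) = 0 := by
    have := hI (Ideal.Quotient.eq.mp hc)
    rwa [RingHom.mem_ker, map_sub, (RingHom.mem_ker).mp hx, sub_zero] at this
  rw [← Ideal.Quotient.eq_zero_iff_mem, ← hc, Ideal.Quotient.mk_algebraMap]
  exact hker hφc

theorem Ideal.Quotient.mk_span_one_sub {A : Type*} [CommRing A] (x : A) :
    Ideal.Quotient.mk (Ideal.span {1 - x}) x = 1 := by
  have h : x - 1 ∈ Ideal.span {1 - x} := by
    simpa using neg_mem (Ideal.mem_span_singleton_self (1 - x))
  simpa using Ideal.Quotient.eq.mpr h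

namespace MonoidAlgebra

variable {R G S : Type*} [CommRing R] [CommRing S]

section Monoid

variable [Monoid G]

noncomputable abbrev evalChar (f : R →+* S) (χ : G →* S) : R[G] →+* S :=
  liftNCRingHom f χ fun _ _ => Commute.all _ _

theorem evalChar_apply (f : R →+* S) (χ : G →* S) (x : R[G]) :
    evalChar f χ x = x.coeff.sum fun a c => f c * χ a := rfl

theorem evalChar_single (f : R →+* S) (χ : G →* S) (a : G) (c : R) :
    evalChar f χ (single a c) = f c * χ a :=
  liftNCRingHom_single ..

theorem evalChar_comp_algebraMap (f : R →+* S) (χ : G →* S) :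
    (evalChar f χ).comp (algebraMap R R[G]) = f := by
  ext c; simp [coe_algebraMap]

theorem span_le_ker_evalChar_iff (f : R →+* S) (χ : G →* S) (g : G) (r : R) :
    Ideal.span {1 - single g r} ≤ RingHom.ker (evalChar f χ) ↔ f r * χ g = 1 := by
  rw [Ideal.span_singleton_le_iff_mem, RingHom.mem_ker, map_sub, map_one, evalChar_single,
    sub_eq_zero, eq_comm]

theorem eq_of_ker_evalChar_le {f : R →+* S} (hf : Function.Surjective f) {χ χ' : G →* S}
    (h : RingHom.ker (evalChar f χ) ≤ RingHom.ker (evalChar f χ')) : χ' = χ := by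
  ext a
  obtain ⟨c, hc⟩ := hf (χ a)
  have hmem : single a 1 - single 1 c ∈ RingHom.ker (evalChar f χ) := by
    simp [hc]
  simpa [hc, sub_eq_zero] using h hmem

end Monoid

theorem pow_sub_one_mem_ker_algebraMap_quotient [CommMonoid G] {g : G} {n : ℕ}
    (hg : g ^ n = 1) (r : R) :
    r ^ n - 1 ∈ RingHom.ker (algebraMap R (R[G] ⧸ Ideal.span {1 - single g r})) := by
  rw [RingHom.mem_ker, map_sub, map_one, sub_eq_zero, ← Ideal.Quotient.mk_algebraMap,
    coe_algebraMap, Function.comp_apply, Algebra.algebraMap_self, RingHom.id_apply, ← hg,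
    ← single_pow, map_pow, Ideal.Quotient.mk_span_one_sub, one_pow]

theorem algebraMap_quotient_surjective_of_forall_mem_zpowers [CommGroup G] {g : G}
    (hg : ∀ a, a ∈ Subgroup.zpowers g) (r : Rˣ) :
    Function.Surjective (algebraMap R (R[G] ⧸ Ideal.span {1 - single g (r : R)})) := by
  set I := Ideal.span {1 - single g (r : R)}
  set ι := algebraMap R (R[G] ⧸ I)
  let φ : G →* (R[G] ⧸ I)ˣ :=
    ((Ideal.Quotient.mk I).toMonoidHom.comp (of R G)).toHomUnits
  have hφg : φ g = Units.map ι r⁻¹ := by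
    have hr : ι r * Ideal.Quotient.mk I (of R G g) = 1 := by
      rw [← Ideal.Quotient.mk_algebraMap, ← map_mul, ← Algebra.smul_def, smul_of]
      exact Ideal.Quotient.mk_span_one_sub _
    ext
    calc Ideal.Quotient.mk I (of R G g)
        = ι ↑r⁻¹ * (ι r * Ideal.Quotient.mk I (of R G g)) := by
          rw [← mul_assoc, ← map_mul, Units.inv_mul, map_one, one_mul]
      _ = ι ↑r⁻¹ := by rw [hr, mul_one]
  have hof : ∀ a, Ideal.Quotient.mk I (of R G a) ∈ Set.range ι := by
    intro a
    obtain ⟨k, rfl⟩ := Subgroup.mem_zpowers_iff.mp (hg a)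
    have hφk : φ (g ^ k) = Units.map ι (r⁻¹ ^ k) := by rw [map_zpow, hφg, ← map_zpow]
    exact ⟨↑(r⁻¹ ^ k), (congrArg Units.val hφk).symm⟩
  intro y
  obtain ⟨x, rfl⟩ := Ideal.Quotient.mk_surjective y
  induction x using induction_on with
  | of a => exact hof a
  | add x y hx hy =>
    obtain ⟨c, hc⟩ := hx
    obtain ⟨d, hd⟩ := hy
    exact ⟨c + d, by rw [map_add, map_add, hc, hd]⟩
  | smul c x hx =>
    obtain ⟨d, hd⟩ := hx
    exact ⟨c * d, by
      rw [map_mul, hd, ← Algebra.smul_def, ← Ideal.Quotient.mkₐ_eq_mk R, map_smul]⟩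

end MonoidAlgebra

namespace PadicInt

variable {p : ℕ} [Fact p.Prime]

theorem toZMod_eq_zero_iff_dvd {x : ℤ_[p]} : toZMod x = 0 ↔ (p : ℤ_[p]) ∣ x := by
  rw [← RingHom.mem_ker, ker_toZMod, maximalIdeal_eq_span_p, Ideal.mem_span_singleton]

theorem isUnit_of_toZMod_ne_zero {x : ℤ_[p]} (hx : toZMod x ≠ 0) : IsUnit x := by
  rwa [← IsLocalRing.notMem_maximalIdeal, ← ker_toZMod, RingHom.mem_ker]

theorem not_sq_dvd_p : ¬(p : ℤ_[p]) ^ 2 ∣ p := by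
  nth_rw 2 [← pow_one (p : ℤ_[p])]
  rw [pow_dvd_pow_iff prime_p.ne_zero prime_p.not_isUnit]
  omega

theorem associated_of_dvd_of_not_sq_dvd {x : ℤ_[p]} (h : (p : ℤ_[p]) ∣ x)
    (h2 : ¬(p : ℤ_[p]) ^ 2 ∣ x) : Associated (p : ℤ_[p]) x := by
  obtain ⟨y, rfl⟩ := h
  refine associated_mul_unit_right _ _ (isUnit_of_toZMod_ne_zero fun hy => h2 ?_)
  rw [pow_two]
  exact mul_dvd_mul_left _ (toZMod_eq_zero_iff_dvd.mp hy)

theorem associated_sub_pow_sub_one {b z : ℤ_[p]} (hz : z ^ (p - 1) = 1)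
    (hbz : toZMod b = toZMod z) : Associated (b - z) (b ^ (p - 1) - 1) := by
  -- `b ^ (p - 1) - 1 = (b - z) w`, and `w ≡ (p - 1) z ^ (p - 2)` is a unit mod `p`
  set w := ∑ i ∈ Finset.range (p - 1), b ^ i * z ^ (p - 1 - 1 - i)
  have hzero : toZMod z ≠ 0 := by
    intro h0
    simpa [h0, zero_pow (Nat.sub_ne_zero_of_lt (Fact.out : p.Prime).one_lt)] using
      congrArg toZMod hz
  have hw : toZMod w = ((p - 1 : ℕ) : ZMod p) * toZMod z ^ (p - 1 - 1) := by
    rw [map_sum, Finset.sum_congr rfl fun i hi => ?_, Finset.sum_const, Finset.card_range,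
      nsmul_eq_mul]
    rw [map_mul, map_pow, map_pow, hbz, ← pow_add]
    congr 1
    have := Finset.mem_range.mp hi
    omega
  have hp1 : ((p - 1 : ℕ) : ZMod p) ≠ 0 := by
    rw [Ne, ZMod.natCast_eq_zero_iff]
    exact Nat.not_dvd_of_pos_of_lt (Nat.sub_pos_of_lt (Fact.out : p.Prime).one_lt)
      (Nat.sub_lt (Fact.out : p.Prime).pos one_pos)
  have hwu : IsUnit w :=
    isUnit_of_toZMod_ne_zero (by rw [hw]; exact mul_ne_zero hp1 (pow_ne_zero _ hzero))
  exact ⟨hwu.unit, by rw [IsUnit.unit_spec, mul_comm, geom_sum₂_mul, hz]⟩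

end PadicInt

section Cyclotomic

open PadicInt

variable (p : ℕ) [Fact p.Prime]

/-- `ℤ_p[G]` acts on `μ_p ≅ ZMod p` through this map, `σ_a` acting as multiplication by `a`. -/
noncomputable abbrev muAction : ℤ_[p][(ZMod p)ˣ] →+* ZMod p :=
  evalChar toZMod (Units.coeHom (ZMod p))

variable {p}

theorem forall_coeff_sum_eq_zero_iff_mem_ker (x : ℤ_[p][(ZMod p)ˣ]) :
    (∀ ζ : ZMod p, x.coeff.sum (fun a c => toZMod c * ((a : ZMod p) * ζ)) = 0) ↔
      x ∈ RingHom.ker (muAction p) := by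
  have h : ∀ ζ, x.coeff.sum (fun a c => toZMod c * ((a : ZMod p) * ζ)) = muAction p x * ζ := by
    intro ζ
    simp only [evalChar_apply, Finsupp.sum_mul, mul_assoc, Units.coeHom_apply]
  simp only [h, RingHom.mem_ker]
  exact ⟨fun hx => by simpa using hx 1, fun hx ζ => by rw [hx, zero_mul]⟩

theorem orderOf_eq_of_span_eq_ker {u : (ZMod p)ˣ} {r : ℤ_[p]} (hr : toZMod r = u)
    (h : Ideal.span {1 - single u⁻¹ r} = RingHom.ker (muAction p)) : orderOf u = p - 1 := by
  set d := orderOf u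
  -- `a ↦ a ^ (d + 1)` also kills `1 - r σ_u⁻¹`, so it must be the identity character
  let χ : (ZMod p)ˣ →* ZMod p := (Units.coeHom (ZMod p)).comp (powMonoidHom (d + 1))
  have hle : Ideal.span {1 - single u⁻¹ r} ≤ RingHom.ker (evalChar toZMod χ) := by
    rw [span_le_ker_evalChar_iff, hr, MonoidHom.comp_apply, powMonoidHom_apply,
      Units.coeHom_apply, ← Units.val_mul, inv_pow, pow_succ, pow_orderOf_eq_one, one_mul,
      mul_inv_cancel, Units.val_one]
  have hχ : χ = Units.coeHom (ZMod p) :=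
    eq_of_ker_evalChar_le (ZMod.ringHom_surjective _) (h ▸ hle)
  have hexp : Monoid.exponent (ZMod p)ˣ ∣ d := by
    refine Monoid.exponent_dvd_of_forall_pow_eq_one fun a => ?_
    have ha := DFunLike.congr_fun hχ a
    simp only [χ, MonoidHom.comp_apply, powMonoidHom_apply, Units.coeHom_apply] at ha
    simpa [pow_succ] using Units.ext ha
  rw [IsCyclic.exponent_eq_card, Nat.card_eq_fintype_card, ZMod.card_units] at hexp
  refine Nat.dvd_antisymm ?_ hexp
  rw [← ZMod.card_units p]
  exact orderOf_dvd_card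

theorem not_sq_dvd_sub_of_natCast_mem_span (ω : (ZMod p)ˣ →* ℤ_[p]ˣ) {u : (ZMod p)ˣ}
    {r : ℤ_[p]} (h : (p : ℤ_[p][(ZMod p)ˣ]) ∈ Ideal.span {1 - single u⁻¹ r}) :
    ¬(p : ℤ_[p]) ^ 2 ∣ r - ω u := by
  let ψ := evalChar (RingHom.id ℤ_[p]) ((Units.coeHom ℤ_[p]).comp ω)
  have hψ : ψ (1 - single u⁻¹ r) = -↑(ω u)⁻¹ * (r - ω u) := by
    rw [map_sub, map_one, evalChar_single, MonoidHom.comp_apply, map_inv, Units.coeHom_apply,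
      RingHom.id_apply, neg_mul, mul_sub, Units.inv_mul, mul_comm]
    ring
  have hdvd := map_dvd ψ (Ideal.mem_span_singleton.mp h)
  rw [hψ, map_natCast] at hdvd
  exact fun hsq => not_sq_dvd_p (hsq.trans ((Dvd.intro_left _ rfl).trans hdvd))

theorem span_eq_ker_of_orderOf_eq {u : (ZMod p)ˣ} (hu : orderOf u = p - 1) {r z : ℤ_[p]}
    (hr : toZMod r = u) (hz : toZMod z = u) (hz1 : z ^ (p - 1) = 1)
    (hrz : ¬(p : ℤ_[p]) ^ 2 ∣ r - z) :
    Ideal.span {1 - single u⁻¹ r} = RingHom.ker (muAction p) := by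
  have hru : IsUnit r := isUnit_of_toZMod_ne_zero (hr ▸ u.ne_zero)
  have hgen : ∀ a, a ∈ Subgroup.zpowers u⁻¹ := by
    have htop : Subgroup.zpowers u = ⊤ := Subgroup.eq_top_of_card_eq _ (by
      rw [Nat.card_zpowers, hu, Nat.card_eq_fintype_card, ZMod.card_units])
    simp [Subgroup.zpowers_inv, htop]
  have hsurj := algebraMap_quotient_surjective_of_forall_mem_zpowers hgen hru.unit
  rw [hru.unit_spec] at hsurj
  refine Ideal.eq_ker_of_algebraMap_quotient_surjective hsurj ?_ ?_
  · rw [span_le_ker_evalChar_iff, hr, Units.coeHom_apply, Units.mul_inv]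
  · rw [evalChar_comp_algebraMap, ker_toZMod, maximalIdeal_eq_span_p,
      Ideal.span_singleton_le_iff_mem]
    have hpr : Associated (p : ℤ_[p]) (r ^ (p - 1) - 1) :=
      (associated_of_dvd_of_not_sq_dvd
        (toZMod_eq_zero_iff_dvd.mp (by rw [map_sub, hr, hz, sub_self])) hrz).trans
        (associated_sub_pow_sub_one hz1 (hr.trans hz.symm))
    obtain ⟨v, hv⟩ := hpr.symm
    rw [← hv]
    exact Ideal.mul_mem_right _ _ (pow_sub_one_mem_ker_algebraMap_quotient
      (by rw [inv_pow, ← hu, pow_orderOf_eq_one, inv_one]) r)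

end Cyclotomic

theorem stmt_7_general (l : ℕ) [Fact l.Prime]
    (ω : (ZMod l)ˣ →* ℤ_[l]ˣ)
    (hω : ∀ a : (ZMod l)ˣ, PadicInt.toZMod ((ω a : ℤ_[l]ˣ) : ℤ_[l]) = (a : ZMod l))
    (b : ℕ) (hb : Nat.Coprime b l) :
    (∀ x : MonoidAlgebra ℤ_[l] (ZMod l)ˣ,
        x ∈ Ideal.span
          {(1 : MonoidAlgebra ℤ_[l] (ZMod l)ˣ) -
            MonoidAlgebra.single ((ZMod.unitOfCoprime b hb)⁻¹) (b : ℤ_[l])} ↔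
        ∀ ζ : ZMod l,
          x.coeff.sum (fun a c => PadicInt.toZMod c * ((a : ZMod l) * ζ)) = 0) ↔
      (orderOf (ω (ZMod.unitOfCoprime b hb)) = l - 1 ∧
        ((b : ℤ_[l]) - ((ω (ZMod.unitOfCoprime b hb) : ℤ_[l]ˣ) : ℤ_[l])) ∉
          Ideal.span {((l : ℤ_[l]) ^ 2)}) := by
  set u := ZMod.unitOfCoprime b hb
  have hbu : PadicInt.toZMod (b : ℤ_[l]) = u := by simp [u]
  have hωinj : Function.Injective ω := (injective_iff_map_eq_one ω).mpr fun a ha =>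
    Units.ext (by simpa [ha] using (hω a).symm)
  simp_rw [forall_coeff_sum_eq_zero_iff_mem_ker, ← SetLike.ext_iff, Ideal.mem_span_singleton,
    orderOf_injective ω hωinj]
  constructor
  · intro h
    have hl : (l : ℤ_[l][(ZMod l)ˣ]) ∈ RingHom.ker (muAction l) := by simp
    exact ⟨orderOf_eq_of_span_eq_ker hbu h, not_sq_dvd_sub_of_natCast_mem_span ω (h ▸ hl)⟩
  · rintro ⟨hu, hsq⟩
    refine span_eq_ker_of_orderOf_eq hu hbu (hω u) ?_ hsq
    rw [← Units.val_pow_eq_pow_val, ← hu, ← orderOf_injective ω hωinj, pow_orderOf_eq_one,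
      Units.val_one]

/-- Lemma 6.1 of the paper: for an odd prime `l` and `b` coprime to `l`, the element
`1 - b·σ_b⁻¹` generates the annihilator ideal `Ann_{ℤ_l[G]}(μ_l)` (where
`G = Gal(ℚ(μ_l)/ℚ) ≅ (ℤ/l)ˣ` acts on `μ_l ≅ ℤ/l` by `σ_a : ζ ↦ a·ζ`) if and only if
(1) `ω(b̄)` generates `μ_{l-1} ⊂ ℤ_lˣ`, and (2) `b ≢ ω(b̄) mod l²`. -/
theorem stmt_7 (l : ℕ) [Fact l.Prime] (hl : Odd l)
    (ω : (ZMod l)ˣ →* ℤ_[l]ˣ)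
    (hω : ∀ a : (ZMod l)ˣ, PadicInt.toZMod ((ω a : ℤ_[l]ˣ) : ℤ_[l]) = (a : ZMod l))
    (b : ℕ) (hb : Nat.Coprime b l) :
    (∀ x : MonoidAlgebra ℤ_[l] (ZMod l)ˣ,
        x ∈ Ideal.span
          {(1 : MonoidAlgebra ℤ_[l] (ZMod l)ˣ) -
            MonoidAlgebra.single ((ZMod.unitOfCoprime b hb)⁻¹) (b : ℤ_[l])} ↔
        ∀ ζ : ZMod l,
          x.coeff.sum (fun a c => PadicInt.toZMod c * ((a : ZMod l) * ζ)) = 0) ↔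
      (orderOf (ω (ZMod.unitOfCoprime b hb)) = l - 1 ∧
        ((b : ℤ_[l]) - ((ω (ZMod.unitOfCoprime b hb) : ℤ_[l]ˣ) : ℤ_[l])) ∉
          Ideal.span {((l : ℤ_[l]) ^ 2)}) :=
  stmt_7_general l ω hω b hb
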